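/- Let A_{ij} be abelian groups for 1 ≤ i < j ≤ 4, let Q_i = (M_i, H_i, Δ_i) be odd form groups for 1 ≤ i ≤ 4, let μ_{ijk} : A_{ij} × A_{jk} → A_{ik} be biadditive maps for all 1 ≤ i < j < k ≤ 4, let (α_{ij}, β_{ij}, γ_{ij}) : Q_i × A_{ij} → Q_j be sesquiquadratic maps of odd form groups for all 1 ≤ i < j ≤ 4 except (i, j) = (2, 4), and let (α_{24}, β_{24}) : (M₂, H₂) × A_{24} → (M₄, H₄) be a sesquiquadratic map of hermitian groups. Suppose that the odd form parameter Δ₂ is generated by the image of γ₁₂ (i.e. Δ₂ is generated as a group by φ(H₂) together with the image of γ₁₂), that A_{24} is generated by the elements μ_{234}(b, c), and that all possible associative laws hold (including μ_{134}(μ_{123}(a, b), c) = μ_{124}(a, μ_{234}(b, c)) and the associative laws for the given sesquiquadratic maps and biadditive maps). Then (α_{24}, β_{24}) can be completed to a unique sesquiquadratic map of odd form groups (α_{24}, β_{24}, γ_{24}) : Q₂ × A_{24} → Q₄ satisfying the remaining associative laws γ_{24}(γ_{12}(u, a), b) = γ_{14}(u, μ_{124}(a, b)) and γ_{34}(γ_{23}(u,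 a), b) = γ_{24}(u, μ_{234}(a, b)). -/

import Mathlib

/-- A hermitian group `(M, H)`: abelian groups with an involution on `H` and a
biadditive pairing `M × M → H` compatible with the involution. -/
structure HermitianGroup (M H : Type) [AddCommGroup M] [AddCommGroup H] where
  bar : H → H
  bar_add : ∀ h h', bar (h + h') = bar h + bar h'
  bar_bar : ∀ h, bar (bar h) = h
  pair : M → M → H
  pair_add_left : ∀ m m' n, pair (m + m') n = pair m n + pair m' n
  pair_add_right : ∀ m n n', pair m (n + n') = pair m n + pair m n'
  bar_pair : ∀ m m', bar (pair m m') = pair m' m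

/-- An odd form group `(M, H, Δ)` over a hermitian group `(M, H)`. -/
structure OddFormGroupStr {M H : Type} [AddCommGroup M] [AddCommGroup H]
    (hg : HermitianGroup M H) (Δ : Type) [AddGroup Δ] where
  φ : H → Δ
  π : Δ → M
  ρ : Δ → H
  φ_plus_bar : ∀ h, φ (h + hg.bar h) = 0
  φ_add : ∀ h h', φ (h + h') = φ h + φ h'
  φ_pair : ∀ m, φ (hg.pair m m) = 0
  π_φ : ∀ h, π (φ h) = 0
  ρ_φ : ∀ h, ρ (φ h) = h - hg.bar h
  π_add : ∀ u v, π (u + v) = π u + π v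
  ρ_add : ∀ u v, ρ (u + v) = ρ u - hg.pair (π u) (π v) + ρ v
  add_comm' : ∀ u v, u + v = v + u - φ (hg.pair (π u) (π v))
  ρ_bar : ∀ u, ρ u + hg.pair (π u) (π u) + hg.bar (ρ u) = 0

/-- A sesquiquadratic map of hermitian groups `(M₁,H₁) × N → (M₂,H₂)`. -/
structure SqHermStr {M₁ H₁ M₂ H₂ : Type} [AddCommGroup M₁] [AddCommGroup H₁]
    [AddCommGroup M₂] [AddCommGroup H₂]
    (hg₁ : HermitianGroup M₁ H₁) (hg₂ : HermitianGroup M₂ H₂)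
    (N : Type) [AddCommGroup N] where
  α : M₁ → N → M₂
  β : N → H₁ → N → H₂
  α_add_left : ∀ m m' n, α (m + m') n = α m n + α m' n
  α_add_right : ∀ m n n', α m (n + n') = α m n + α m n'
  β_add₁ : ∀ n n' h n'', β (n + n') h n'' = β n h n'' + β n' h n''
  β_add₂ : ∀ n h h' n', β n (h + h') n' = β n h n' + β n h' n'
  β_add₃ : ∀ n h n' n'', β n h (n' + n'') = β n h n' + β n h n''
  bar_β : ∀ n h n', hg₂.bar (β n h n') = β n' (hg₁.bar h) n
  pair_α : ∀ m n m' n', hg₂.pair (α m n) (α m' n') = β n (hg₁.pair m m') n'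

/-- A sesquiquadratic map of odd form groups `(M₁,H₁,Δ₁) × N → (M₂,H₂,Δ₂)`. -/
structure SqOFG {M₁ H₁ M₂ H₂ : Type} [AddCommGroup M₁] [AddCommGroup H₁]
    [AddCommGroup M₂] [AddCommGroup H₂]
    {hg₁ : HermitianGroup M₁ H₁} {hg₂ : HermitianGroup M₂ H₂}
    {Δ₁ Δ₂ : Type} [AddGroup Δ₁] [AddGroup Δ₂]
    (ofg₁ : OddFormGroupStr hg₁ Δ₁) (ofg₂ : OddFormGroupStr hg₂ Δ₂)
    (N : Type) [AddCommGroup N] extends SqHermStr hg₁ hg₂ N where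
  γ : Δ₁ → N → Δ₂
  π_γ : ∀ u n, ofg₂.π (γ u n) = α (ofg₁.π u) n
  γ_φ : ∀ h n, γ (ofg₁.φ h) n = ofg₂.φ (β n h n)
  γ_add : ∀ u u' n, γ (u + u') n = γ u n + γ u' n
  ρ_γ : ∀ u n, ofg₂.ρ (γ u n) = β n (ofg₁.ρ u) n
  γ_add_right : ∀ u n n', γ u (n + n') = γ u n + ofg₂.φ (β n' (ofg₁.ρ u) n) + γ u n'

/-- `x` has the expression `φ h ∔ ∑ kᵢ·uᵢ` (sum taken along the list `l`). -/
def FreeOFGExpr {M H : Type} [AddCommGroup M] [AddCommGroup H]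
    {hg : HermitianGroup M H} {Δ : Type} [AddGroup Δ]
    (ofg : OddFormGroupStr hg Δ) {I : Type} (u : I → Δ)
    (x : Δ) (h : H) (k : I → ℤ) (l : List I) : Prop :=
  l.Nodup ∧ (∀ i, i ∉ l → k i = 0) ∧
    x = ofg.φ h + (l.map fun i => k i • u i).sum

/-!
Fix `n : A₂₄`. The map `γ₂₄(−, n)` is additive and prescribed on `φ(H₂)` and on the image of
`γ₁₂` (by `γ₂₄(γ₁₂(u, a), n) = γ₁₄(u, μ₁₂₄(a, n))`), which generate `Δ₂`; so it is unique if it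
exists. It exists for `n = μ₂₃₄(b, c)`, namely `u ↦ γ₃₄(γ₂₃(u, b), c)`, and if it exists for `n`
and `n'` then `u ↦ γ₂₄(u, n) ∔ φ(β₂₄(n', ρ u, n)) ∔ γ₂₄(u, n')` works for `n + n'`. Since the
generators `μ₂₃₄(b, c)` of `A₂₄` are closed under negation, every `n` is reached, and uniqueness
turns the construction into the required identity for `γ₂₄(u, n + n')`.
-/

section AdditiveMaps

variable {G K : Type} [AddGroup G] [AddGroup K] {f : G → K}

theorem map_zero_of_map_add (hf : ∀ a b, f (a + b) = f a + f b) : f 0 = 0 :=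
  map_zero (AddMonoidHom.mk' f hf)

theorem map_neg_of_map_add (hf : ∀ a b, f (a + b) = f a + f b) (a : G) : f (-a) = -f a :=
  map_neg (AddMonoidHom.mk' f hf) a

theorem add_add_add_comm_of_add_eq {a b c d z : G} (h : b + c = c + b + z) (hz : AddCommute z d) :
    a + b + (c + d) = a + c + (b + d) + z :=
  calc a + b + (c + d) = a + (b + c) + d := by simp only [add_assoc]
    _ = a + c + b + (z + d) := by rw [h]; simp only [add_assoc]
    _ = a + c + (b + d) + z := by rw [hz.eq]; simp only [add_assoc]

end AdditiveMaps

namespace HermitianGroup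

variable {M H : Type} [AddCommGroup M] [AddCommGroup H] (hg : HermitianGroup M H)

theorem pair_zero_left (m : M) : hg.pair 0 m = 0 :=
  map_zero_of_map_add (f := (hg.pair · m)) fun a b => hg.pair_add_left a b m

theorem pair_zero_right (m : M) : hg.pair m 0 = 0 :=
  map_zero_of_map_add (hg.pair_add_right m)

end HermitianGroup

namespace OddFormGroupStr

variable {M H : Type} [AddCommGroup M] [AddCommGroup H] {hg : HermitianGroup M H}
  {Δ : Type} [AddGroup Δ] (ofg : OddFormGroupStr hg Δ)

theorem φ_neg (h : H) : ofg.φ (-h) = -ofg.φ h :=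
  map_neg_of_map_add ofg.φ_add h

theorem φ_zero : ofg.φ 0 = 0 :=
  map_zero_of_map_add ofg.φ_add

theorem φ_add_add_bar (a x : H) : ofg.φ (a + (x + hg.bar x)) = ofg.φ a := by
  rw [ofg.φ_add, ofg.φ_plus_bar, add_zero]

theorem addCommute_φ (h : H) (v : Δ) : AddCommute (ofg.φ h) v := by
  have hc := ofg.add_comm' (ofg.φ h) v
  rwa [ofg.π_φ, hg.pair_zero_left, ofg.φ_zero, sub_zero] at hc

theorem bar_ρ (u : Δ) : hg.bar (ofg.ρ u) = -(ofg.ρ u + hg.pair (ofg.π u) (ofg.π u)) :=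
  eq_neg_of_add_eq_zero_right (ofg.ρ_bar u)

end OddFormGroupStr

namespace SqHermStr

variable {M₁ H₁ M₂ H₂ : Type} [AddCommGroup M₁] [AddCommGroup H₁] [AddCommGroup M₂]
  [AddCommGroup H₂] {hg₁ : HermitianGroup M₁ H₁} {hg₂ : HermitianGroup M₂ H₂}
  {N : Type} [AddCommGroup N] (sq : SqHermStr hg₁ hg₂ N)

theorem β_neg₂ (n : N) (h : H₁) (n' : N) : sq.β n (-h) n' = -sq.β n h n' :=
  map_neg_of_map_add (f := (sq.β n · n')) (fun a b => sq.β_add₂ n a b n') h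

theorem β_sub₂ (n : N) (h h' : H₁) (n' : N) :
    sq.β n (h - h') n' = sq.β n h n' - sq.β n h' n' := by
  rw [sub_eq_add_neg, sq.β_add₂, sq.β_neg₂, sub_eq_add_neg]

end SqHermStr

section Slices

variable {M₁ H₁ M₂ H₂ M₄ H₄ Δ₁ Δ₂ Δ₄ A₁₂ A₁₄ A₂₄ : Type}
  [AddCommGroup M₁] [AddCommGroup H₁] [AddCommGroup M₂] [AddCommGroup H₂]
  [AddCommGroup M₄] [AddCommGroup H₄] [AddGroup Δ₁] [AddGroup Δ₂] [AddGroup Δ₄]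
  [AddCommGroup A₁₂] [AddCommGroup A₁₄] [AddCommGroup A₂₄]
  {hg₁ : HermitianGroup M₁ H₁} {hg₂ : HermitianGroup M₂ H₂} {hg₄ : HermitianGroup M₄ H₄}
  {ofg₁ : OddFormGroupStr hg₁ Δ₁} {ofg₂ : OddFormGroupStr hg₂ Δ₂} {ofg₄ : OddFormGroupStr hg₄ Δ₄}
  {μ₁₂₄ : A₁₂ → A₂₄ → A₁₄} {sq₁₂ : SqOFG ofg₁ ofg₂ A₁₂} {sq₁₄ : SqOFG ofg₁ ofg₄ A₁₄}
  {sq₂₄ : SqHermStr hg₂ hg₄ A₂₄}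

/-- `g` satisfies the laws required of `γ₂₄(−, n)` that involve this single `n`. -/
structure IsGammaAt (μ₁₂₄ : A₁₂ → A₂₄ → A₁₄) (sq₁₂ : SqOFG ofg₁ ofg₂ A₁₂)
    (sq₁₄ : SqOFG ofg₁ ofg₄ A₁₄) (sq₂₄ : SqHermStr hg₂ hg₄ A₂₄) (n : A₂₄) (g : Δ₂ → Δ₄) :
    Prop where
  map_add : ∀ u u', g (u + u') = g u + g u'
  map_φ : ∀ h, g (ofg₂.φ h) = ofg₄.φ (sq₂₄.β n h n)
  map_γ : ∀ v a, g (sq₁₂.γ v a) = sq₁₄.γ v (μ₁₂₄ a n)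
  π_map : ∀ u, ofg₄.π (g u) = sq₂₄.α (ofg₂.π u) n
  ρ_map : ∀ u, ofg₄.ρ (g u) = sq₂₄.β n (ofg₂.ρ u) n

namespace IsGammaAt

theorem unique (hgen : AddSubgroup.closure (Set.range ofg₂.φ ∪ {x | ∃ u a, x = sq₁₂.γ u a}) = ⊤)
    {n : A₂₄} {g g' : Δ₂ → Δ₄} (hg : IsGammaAt μ₁₂₄ sq₁₂ sq₁₄ sq₂₄ n g)
    (hg' : IsGammaAt μ₁₂₄ sq₁₂ sq₁₄ sq₂₄ n g') : g = g' := by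
  funext u
  have hu : u ∈ AddSubgroup.closure (Set.range ofg₂.φ ∪ {x | ∃ u a, x = sq₁₂.γ u a}) :=
    hgen ▸ AddSubgroup.mem_top u
  induction hu using AddSubgroup.closure_induction with
  | mem x hx =>
    rcases hx with ⟨h, rfl⟩ | ⟨v, a, rfl⟩
    · rw [hg.map_φ, hg'.map_φ]
    · rw [hg.map_γ, hg'.map_γ]
  | zero => rw [map_zero_of_map_add hg.map_add, map_zero_of_map_add hg'.map_add]
  | add x y _ _ ihx ihy => rw [hg.map_add, hg'.map_add, ihx, ihy]
  | neg x _ ihx => rw [map_neg_of_map_add hg.map_add, map_neg_of_map_add hg'.map_add, ihx]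

theorem add (hμ₁₂₄r : ∀ a b b', μ₁₂₄ a (b + b') = μ₁₂₄ a b + μ₁₂₄ a b')
    (h124β : ∀ a b h a' b', sq₂₄.β b (sq₁₂.β a h a') b' = sq₁₄.β (μ₁₂₄ a b) h (μ₁₂₄ a' b'))
    {n n' : A₂₄} {g g' : Δ₂ → Δ₄} (hg : IsGammaAt μ₁₂₄ sq₁₂ sq₁₄ sq₂₄ n g)
    (hg' : IsGammaAt μ₁₂₄ sq₁₂ sq₁₄ sq₂₄ n' g') :
    IsGammaAt μ₁₂₄ sq₁₂ sq₁₄ sq₂₄ (n + n')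
      (fun u => g u + ofg₄.φ (sq₂₄.β n' (ofg₂.ρ u) n) + g' u) where
  map_add u u' := by
    have hswap : g u' + g' u =
        g' u + g u' + ofg₄.φ (-sq₂₄.β n (hg₂.pair (ofg₂.π u') (ofg₂.π u)) n') := by
      rw [ofg₄.φ_neg, ← sub_eq_add_neg, ← sq₂₄.pair_α, ← hg.π_map, ← hg'.π_map]
      exact ofg₄.add_comm' _ _
    -- The commutator of `g u'` and `g' u` is `φ(−x̄)` for the cross term `x` of `ρ (u + u')`,
    -- and `φ(x + x̄) = 0`.
    have hcorrection : ofg₄.φ (-sq₂₄.β n (hg₂.pair (ofg₂.π u') (ofg₂.π u)) n') +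
        ofg₄.φ (sq₂₄.β n' (ofg₂.ρ (u + u')) n) =
        ofg₄.φ (sq₂₄.β n' (ofg₂.ρ u) n) + ofg₄.φ (sq₂₄.β n' (ofg₂.ρ u') n) := by
      rw [← ofg₄.φ_add, ← ofg₄.φ_add,
        ← ofg₄.φ_add_add_bar _ (sq₂₄.β n' (hg₂.pair (ofg₂.π u) (ofg₂.π u')) n),
        sq₂₄.bar_β, hg₂.bar_pair, ofg₂.ρ_add, sq₂₄.β_add₂, sq₂₄.β_sub₂]
      congr 1
      abel
    have hreorder : ∀ u, g u + ofg₄.φ (sq₂₄.β n' (ofg₂.ρ u) n) + g' u =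
        g u + g' u + ofg₄.φ (sq₂₄.β n' (ofg₂.ρ u) n) :=
      fun u => (ofg₄.addCommute_φ _ _).right_comm _
    simp only [hreorder]
    calc g (u + u') + g' (u + u') + ofg₄.φ (sq₂₄.β n' (ofg₂.ρ (u + u')) n)
        = g u + g u' + (g' u + g' u') + ofg₄.φ (sq₂₄.β n' (ofg₂.ρ (u + u')) n) := by
          rw [hg.map_add, hg'.map_add]
      _ = g u + g' u + (g u' + g' u') +
          (ofg₄.φ (sq₂₄.β n' (ofg₂.ρ u) n) + ofg₄.φ (sq₂₄.β n' (ofg₂.ρ u') n)) := by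
          rw [add_add_add_comm_of_add_eq hswap (ofg₄.addCommute_φ _ _), add_assoc _ (ofg₄.φ _),
            hcorrection]
      _ = _ := (ofg₄.addCommute_φ _ _).symm.add_add_add_comm _ _
  map_φ h := by
    rw [hg.map_φ, hg'.map_φ, ofg₂.ρ_φ, sq₂₄.β_sub₂, ← sq₂₄.bar_β, ← ofg₄.φ_add, ← ofg₄.φ_add,
      ← ofg₄.φ_add_add_bar _ (sq₂₄.β n h n'), sq₂₄.β_add₁, sq₂₄.β_add₃, sq₂₄.β_add₃]
    congr 1
    abel
  map_γ v a := by
    rw [hg.map_γ, hg'.map_γ, sq₁₂.ρ_γ, h124β, hμ₁₂₄r, sq₁₄.γ_add_right]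
  π_map u := by
    rw [ofg₄.π_add, ofg₄.π_add, ofg₄.π_φ, add_zero, hg.π_map, hg'.π_map, sq₂₄.α_add_right]
  ρ_map u := by
    rw [ofg₄.ρ_add, ofg₄.ρ_add, ofg₄.π_add, ofg₄.π_φ, add_zero, ofg₄.ρ_φ, hg.ρ_map, hg'.ρ_map,
      hg.π_map, hg'.π_map, sq₂₄.pair_α, hg₄.pair_zero_right, sub_zero, sq₂₄.bar_β,
      ofg₂.bar_ρ, sq₂₄.β_neg₂, sq₂₄.β_add₂, sq₂₄.β_add₁, sq₂₄.β_add₃, sq₂₄.β_add₃]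
    abel

end IsGammaAt

end Slices

section Existence

variable {M₁ H₁ M₂ H₂ M₃ H₃ M₄ H₄ Δ₁ Δ₂ Δ₃ Δ₄ A₁₂ A₁₃ A₁₄ A₂₃ A₂₄ A₃₄ : Type}
  [AddCommGroup M₁] [AddCommGroup H₁] [AddCommGroup M₂] [AddCommGroup H₂]
  [AddCommGroup M₃] [AddCommGroup H₃] [AddCommGroup M₄] [AddCommGroup H₄]
  [AddGroup Δ₁] [AddGroup Δ₂] [AddGroup Δ₃] [AddGroup Δ₄]
  [AddCommGroup A₁₂] [AddCommGroup A₁₃] [AddCommGroup A₁₄]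
  [AddCommGroup A₂₃] [AddCommGroup A₂₄] [AddCommGroup A₃₄]
  {hg₁ : HermitianGroup M₁ H₁} {hg₂ : HermitianGroup M₂ H₂}
  {hg₃ : HermitianGroup M₃ H₃} {hg₄ : HermitianGroup M₄ H₄}
  {ofg₁ : OddFormGroupStr hg₁ Δ₁} {ofg₂ : OddFormGroupStr hg₂ Δ₂}
  {ofg₃ : OddFormGroupStr hg₃ Δ₃} {ofg₄ : OddFormGroupStr hg₄ Δ₄}
  {μ₁₂₃ : A₁₂ → A₂₃ → A₁₃} {μ₁₂₄ : A₁₂ → A₂₄ → A₁₄}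
  {μ₁₃₄ : A₁₃ → A₃₄ → A₁₄} {μ₂₃₄ : A₂₃ → A₃₄ → A₂₄}
  {sq₁₂ : SqOFG ofg₁ ofg₂ A₁₂} {sq₁₃ : SqOFG ofg₁ ofg₃ A₁₃} {sq₁₄ : SqOFG ofg₁ ofg₄ A₁₄}
  {sq₂₃ : SqOFG ofg₂ ofg₃ A₂₃} {sq₃₄ : SqOFG ofg₃ ofg₄ A₃₄} {sq₂₄ : SqHermStr hg₂ hg₄ A₂₄}

theorem IsGammaAt.of_μ₂₃₄ (hμassoc : ∀ a b c, μ₁₃₄ (μ₁₂₃ a b) c = μ₁₂₄ a (μ₂₃₄ b c))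
    (h123γ : ∀ u a b, sq₂₃.γ (sq₁₂.γ u a) b = sq₁₃.γ u (μ₁₂₃ a b))
    (h134γ : ∀ u a b, sq₃₄.γ (sq₁₃.γ u a) b = sq₁₄.γ u (μ₁₃₄ a b))
    (h234α : ∀ m a b, sq₃₄.α (sq₂₃.α m a) b = sq₂₄.α m (μ₂₃₄ a b))
    (h234β : ∀ a b h a' b', sq₃₄.β b (sq₂₃.β a h a') b' = sq₂₄.β (μ₂₃₄ a b) h (μ₂₃₄ a' b'))
    (b : A₂₃) (c : A₃₄) :
    IsGammaAt μ₁₂₄ sq₁₂ sq₁₄ sq₂₄ (μ₂₃₄ b c) (fun u => sq₃₄.γ (sq₂₃.γ u b) c) where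
  map_add u u' := by rw [sq₂₃.γ_add, sq₃₄.γ_add]
  map_φ h := by rw [sq₂₃.γ_φ, sq₃₄.γ_φ, h234β]
  map_γ v a := by rw [h123γ, h134γ, hμassoc]
  π_map u := by rw [sq₃₄.π_γ, sq₂₃.π_γ, h234α]
  ρ_map u := by rw [sq₃₄.ρ_γ, sq₂₃.ρ_γ, h234β]

theorem exists_isGammaAt (hμ₁₂₄r : ∀ a b b', μ₁₂₄ a (b + b') = μ₁₂₄ a b + μ₁₂₄ a b')
    (hμ₂₃₄l : ∀ a a' b, μ₂₃₄ (a + a') b = μ₂₃₄ a b + μ₂₃₄ a' b)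
    (hgenA : AddSubgroup.closure {x : A₂₄ | ∃ b c, x = μ₂₃₄ b c} = ⊤)
    (hμassoc : ∀ a b c, μ₁₃₄ (μ₁₂₃ a b) c = μ₁₂₄ a (μ₂₃₄ b c))
    (h123γ : ∀ u a b, sq₂₃.γ (sq₁₂.γ u a) b = sq₁₃.γ u (μ₁₂₃ a b))
    (h134γ : ∀ u a b, sq₃₄.γ (sq₁₃.γ u a) b = sq₁₄.γ u (μ₁₃₄ a b))
    (h124β : ∀ a b h a' b', sq₂₄.β b (sq₁₂.β a h a') b' = sq₁₄.β (μ₁₂₄ a b) h (μ₁₂₄ a' b'))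
    (h234α : ∀ m a b, sq₃₄.α (sq₂₃.α m a) b = sq₂₄.α m (μ₂₃₄ a b))
    (h234β : ∀ a b h a' b', sq₃₄.β b (sq₂₃.β a h a') b' = sq₂₄.β (μ₂₃₄ a b) h (μ₂₃₄ a' b'))
    (n : A₂₄) : ∃ g, IsGammaAt μ₁₂₄ sq₁₂ sq₁₄ sq₂₄ n g := by
  have of_μ₂₃₄ := IsGammaAt.of_μ₂₃₄ hμassoc h123γ h134γ h234α h234β
  have hneg (b : A₂₃) (c : A₃₄) : -μ₂₃₄ b c = μ₂₃₄ (-b) c :=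
    (map_neg_of_map_add (f := (μ₂₃₄ · c)) (fun a a' => hμ₂₃₄l a a' c) b).symm
  have hzero : (0 : A₂₄) = μ₂₃₄ 0 0 :=
    (map_zero_of_map_add (f := (μ₂₃₄ · 0)) (fun a a' => hμ₂₃₄l a a' 0)).symm
  have hn : n ∈ AddSubgroup.closure {x : A₂₄ | ∃ b c, x = μ₂₃₄ b c} := hgenA ▸ AddSubgroup.mem_top n
  induction hn using AddSubgroup.closure_induction'' with
  | mem x hx => obtain ⟨b, c, rfl⟩ := hx; exact ⟨_, of_μ₂₃₄ b c⟩
  | neg_mem x hx => obtain ⟨b, c, rfl⟩ := hx; exact hneg b c ▸ ⟨_, of_μ₂₃₄ (-b) c⟩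
  | zero => exact hzero ▸ ⟨_, of_μ₂₃₄ 0 0⟩
  | add x y _ _ hx hy =>
    obtain ⟨g, hg⟩ := hx
    obtain ⟨g', hg'⟩ := hy
    exact ⟨_, hg.add hμ₁₂₄r h124β hg'⟩

end Existence

theorem statement14_general {M₁ H₁ M₂ H₂ M₃ H₃ M₄ H₄ Δ₁ Δ₂ Δ₃ Δ₄ : Type}
    {A₁₂ A₁₃ A₁₄ A₂₃ A₂₄ A₃₄ : Type}
    [AddCommGroup M₁] [AddCommGroup H₁] [AddCommGroup M₂] [AddCommGroup H₂]
    [AddCommGroup M₃] [AddCommGroup H₃] [AddCommGroup M₄] [AddCommGroup H₄]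
    [AddGroup Δ₁] [AddGroup Δ₂] [AddGroup Δ₃] [AddGroup Δ₄]
    [AddCommGroup A₁₂] [AddCommGroup A₁₃] [AddCommGroup A₁₄]
    [AddCommGroup A₂₃] [AddCommGroup A₂₄] [AddCommGroup A₃₄]
    {hg₁ : HermitianGroup M₁ H₁} {hg₂ : HermitianGroup M₂ H₂}
    {hg₃ : HermitianGroup M₃ H₃} {hg₄ : HermitianGroup M₄ H₄}
    {ofg₁ : OddFormGroupStr hg₁ Δ₁} {ofg₂ : OddFormGroupStr hg₂ Δ₂}
    {ofg₃ : OddFormGroupStr hg₃ Δ₃} {ofg₄ : OddFormGroupStr hg₄ Δ₄}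
    -- biadditive multiplication maps
    (μ₁₂₃ : A₁₂ → A₂₃ → A₁₃) (μ₁₂₄ : A₁₂ → A₂₄ → A₁₄)
    (μ₁₃₄ : A₁₃ → A₃₄ → A₁₄) (μ₂₃₄ : A₂₃ → A₃₄ → A₂₄)
    (hμ₁₂₄r : ∀ a b b', μ₁₂₄ a (b + b') = μ₁₂₄ a b + μ₁₂₄ a b')
    (hμ₂₃₄l : ∀ a a' b, μ₂₃₄ (a + a') b = μ₂₃₄ a b + μ₂₃₄ a' b)
    -- sesquiquadratic maps, with only a hermitian-level map for (2,4)
    (sq₁₂ : SqOFG ofg₁ ofg₂ A₁₂) (sq₁₃ : SqOFG ofg₁ ofg₃ A₁₃)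
    (sq₁₄ : SqOFG ofg₁ ofg₄ A₁₄) (sq₂₃ : SqOFG ofg₂ ofg₃ A₂₃)
    (sq₃₄ : SqOFG ofg₃ ofg₄ A₃₄)
    (sq₂₄ : SqHermStr hg₂ hg₄ A₂₄)
    -- Δ₂ is generated by the image of γ₁₂ (together with φ(H₂))
    (hgen : AddSubgroup.closure
      (Set.range ofg₂.φ ∪ {x | ∃ u a, x = sq₁₂.γ u a}) = ⊤)
    -- A₂₄ is generated by the products μ₂₃₄(b, c)
    (hgenA : AddSubgroup.closure {x : A₂₄ | ∃ b c, x = μ₂₃₄ b c} = ⊤)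
    -- associativity of the multiplications
    (hμassoc : ∀ a b c, μ₁₃₄ (μ₁₂₃ a b) c = μ₁₂₄ a (μ₂₃₄ b c))
    -- associative law for the triple (1,2,3)
    (h123γ : ∀ u a b, sq₂₃.γ (sq₁₂.γ u a) b = sq₁₃.γ u (μ₁₂₃ a b))
    -- associative law for the triple (1,3,4)
    (h134γ : ∀ u a b, sq₃₄.γ (sq₁₃.γ u a) b = sq₁₄.γ u (μ₁₃₄ a b))
    -- hermitian-level associative law for the triple (1,2,4)
    (h124β : ∀ a b h a' b', sq₂₄.β b (sq₁₂.β a h a') b' = sq₁₄.β (μ₁₂₄ a b) h (μ₁₂₄ a' b'))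
    -- hermitian-level associative law for the triple (2,3,4)
    (h234α : ∀ m a b, sq₃₄.α (sq₂₃.α m a) b = sq₂₄.α m (μ₂₃₄ a b))
    (h234β : ∀ a b h a' b', sq₃₄.β b (sq₂₃.β a h a') b' = sq₂₄.β (μ₂₃₄ a b) h (μ₂₃₄ a' b')) :
    ∃! γ₂₄ : Δ₂ → A₂₄ → Δ₄,
      ((∀ u n, ofg₄.π (γ₂₄ u n) = sq₂₄.α (ofg₂.π u) n) ∧
       (∀ h n, γ₂₄ (ofg₂.φ h) n = ofg₄.φ (sq₂₄.β n h n)) ∧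
       (∀ u u' n, γ₂₄ (u + u') n = γ₂₄ u n + γ₂₄ u' n) ∧
       (∀ u n, ofg₄.ρ (γ₂₄ u n) = sq₂₄.β n (ofg₂.ρ u) n) ∧
       (∀ u n n', γ₂₄ u (n + n') = γ₂₄ u n + ofg₄.φ (sq₂₄.β n' (ofg₂.ρ u) n) + γ₂₄ u n')) ∧
      (∀ u a b, γ₂₄ (sq₁₂.γ u a) b = sq₁₄.γ u (μ₁₂₄ a b)) ∧
      (∀ u a b, sq₃₄.γ (sq₂₃.γ u a) b = γ₂₄ u (μ₂₃₄ a b)) := by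
  choose G hG using exists_isGammaAt hμ₁₂₄r hμ₂₃₄l hgenA hμassoc h123γ h134γ h124β h234α h234β
  have hsum (n n' : A₂₄) :
      G (n + n') = fun u => G n u + ofg₄.φ (sq₂₄.β n' (ofg₂.ρ u) n) + G n' u :=
    (hG _).unique hgen ((hG n).add hμ₁₂₄r h124β (hG n'))
  have hlaw₂₃₄ (b : A₂₃) (c : A₃₄) : (fun u => sq₃₄.γ (sq₂₃.γ u b) c) = G (μ₂₃₄ b c) :=
    (IsGammaAt.of_μ₂₃₄ hμassoc h123γ h134γ h234α h234β b c).unique hgen (hG _)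
  refine ⟨fun u n => G n u, ⟨⟨fun u n => (hG n).π_map u, fun h n => (hG n).map_φ h,
    fun u u' n => (hG n).map_add u u', fun u n => (hG n).ρ_map u,
    fun u n n' => congrFun (hsum n n') u⟩, fun u a n => (hG n).map_γ u a,
    fun u b c => congrFun (hlaw₂₃₄ b c) u⟩, ?_⟩
  rintro γ₂₄ ⟨⟨hπ, hφ, hadd, hρ, -⟩, hlaw₁₂₄, -⟩
  funext u n
  have hγ₂₄ : IsGammaAt μ₁₂₄ sq₁₂ sq₁₄ sq₂₄ n (γ₂₄ · n) :=
    ⟨(hadd · · n), (hφ · n), (hlaw₁₂₄ · · n), (hπ · n), (hρ · n)⟩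
  exact congrFun (hγ₂₄.unique hgen (hG n)) u

/-- Lemma `act-cons`. -/
theorem statement14 {M₁ H₁ M₂ H₂ M₃ H₃ M₄ H₄ Δ₁ Δ₂ Δ₃ Δ₄ : Type}
    {A₁₂ A₁₃ A₁₄ A₂₃ A₂₄ A₃₄ : Type}
    [AddCommGroup M₁] [AddCommGroup H₁] [AddCommGroup M₂] [AddCommGroup H₂]
    [AddCommGroup M₃] [AddCommGroup H₃] [AddCommGroup M₄] [AddCommGroup H₄]
    [AddGroup Δ₁] [AddGroup Δ₂] [AddGroup Δ₃] [AddGroup Δ₄]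
    [AddCommGroup A₁₂] [AddCommGroup A₁₃] [AddCommGroup A₁₄]
    [AddCommGroup A₂₃] [AddCommGroup A₂₄] [AddCommGroup A₃₄]
    {hg₁ : HermitianGroup M₁ H₁} {hg₂ : HermitianGroup M₂ H₂}
    {hg₃ : HermitianGroup M₃ H₃} {hg₄ : HermitianGroup M₄ H₄}
    {ofg₁ : OddFormGroupStr hg₁ Δ₁} {ofg₂ : OddFormGroupStr hg₂ Δ₂}
    {ofg₃ : OddFormGroupStr hg₃ Δ₃} {ofg₄ : OddFormGroupStr hg₄ Δ₄}
    -- biadditive multiplication maps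
    (μ₁₂₃ : A₁₂ → A₂₃ → A₁₃) (μ₁₂₄ : A₁₂ → A₂₄ → A₁₄)
    (μ₁₃₄ : A₁₃ → A₃₄ → A₁₄) (μ₂₃₄ : A₂₃ → A₃₄ → A₂₄)
    (hμ₁₂₃l : ∀ a a' b, μ₁₂₃ (a + a') b = μ₁₂₃ a b + μ₁₂₃ a' b)
    (hμ₁₂₃r : ∀ a b b', μ₁₂₃ a (b + b') = μ₁₂₃ a b + μ₁₂₃ a b')
    (hμ₁₂₄l : ∀ a a' b, μ₁₂₄ (a + a') b = μ₁₂₄ a b + μ₁₂₄ a' b)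
    (hμ₁₂₄r : ∀ a b b', μ₁₂₄ a (b + b') = μ₁₂₄ a b + μ₁₂₄ a b')
    (hμ₁₃₄l : ∀ a a' b, μ₁₃₄ (a + a') b = μ₁₃₄ a b + μ₁₃₄ a' b)
    (hμ₁₃₄r : ∀ a b b', μ₁₃₄ a (b + b') = μ₁₃₄ a b + μ₁₃₄ a b')
    (hμ₂₃₄l : ∀ a a' b, μ₂₃₄ (a + a') b = μ₂₃₄ a b + μ₂₃₄ a' b)
    (hμ₂₃₄r : ∀ a b b', μ₂₃₄ a (b + b') = μ₂₃₄ a b + μ₂₃₄ a b')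
    -- sesquiquadratic maps, with only a hermitian-level map for (2,4)
    (sq₁₂ : SqOFG ofg₁ ofg₂ A₁₂) (sq₁₃ : SqOFG ofg₁ ofg₃ A₁₃)
    (sq₁₄ : SqOFG ofg₁ ofg₄ A₁₄) (sq₂₃ : SqOFG ofg₂ ofg₃ A₂₃)
    (sq₃₄ : SqOFG ofg₃ ofg₄ A₃₄)
    (sq₂₄ : SqHermStr hg₂ hg₄ A₂₄)
    -- Δ₂ is generated by the image of γ₁₂ (together with φ(H₂))
    (hgen : AddSubgroup.closure
      (Set.range ofg₂.φ ∪ {x | ∃ u a, x = sq₁₂.γ u a}) = ⊤)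
    -- A₂₄ is generated by the products μ₂₃₄(b, c)
    (hgenA : AddSubgroup.closure {x : A₂₄ | ∃ b c, x = μ₂₃₄ b c} = ⊤)
    -- associativity of the multiplications
    (hμassoc : ∀ a b c, μ₁₃₄ (μ₁₂₃ a b) c = μ₁₂₄ a (μ₂₃₄ b c))
    -- associative law for the triple (1,2,3)
    (h123α : ∀ m a b, sq₂₃.α (sq₁₂.α m a) b = sq₁₃.α m (μ₁₂₃ a b))
    (h123β : ∀ a b h a' b', sq₂₃.β b (sq₁₂.β a h a') b' = sq₁₃.β (μ₁₂₃ a b) h (μ₁₂₃ a' b'))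
    (h123γ : ∀ u a b, sq₂₃.γ (sq₁₂.γ u a) b = sq₁₃.γ u (μ₁₂₃ a b))
    -- associative law for the triple (1,3,4)
    (h134α : ∀ m a b, sq₃₄.α (sq₁₃.α m a) b = sq₁₄.α m (μ₁₃₄ a b))
    (h134β : ∀ a b h a' b', sq₃₄.β b (sq₁₃.β a h a') b' = sq₁₄.β (μ₁₃₄ a b) h (μ₁₃₄ a' b'))
    (h134γ : ∀ u a b, sq₃₄.γ (sq₁₃.γ u a) b = sq₁₄.γ u (μ₁₃₄ a b))
    -- hermitian-level associative law for the triple (1,2,4)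
    (h124α : ∀ m a b, sq₂₄.α (sq₁₂.α m a) b = sq₁₄.α m (μ₁₂₄ a b))
    (h124β : ∀ a b h a' b', sq₂₄.β b (sq₁₂.β a h a') b' = sq₁₄.β (μ₁₂₄ a b) h (μ₁₂₄ a' b'))
    -- hermitian-level associative law for the triple (2,3,4)
    (h234α : ∀ m a b, sq₃₄.α (sq₂₃.α m a) b = sq₂₄.α m (μ₂₃₄ a b))
    (h234β : ∀ a b h a' b', sq₃₄.β b (sq₂₃.β a h a') b' = sq₂₄.β (μ₂₃₄ a b) h (μ₂₃₄ a' b')) :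
    ∃! γ₂₄ : Δ₂ → A₂₄ → Δ₄,
      ((∀ u n, ofg₄.π (γ₂₄ u n) = sq₂₄.α (ofg₂.π u) n) ∧
       (∀ h n, γ₂₄ (ofg₂.φ h) n = ofg₄.φ (sq₂₄.β n h n)) ∧
       (∀ u u' n, γ₂₄ (u + u') n = γ₂₄ u n + γ₂₄ u' n) ∧
       (∀ u n, ofg₄.ρ (γ₂₄ u n) = sq₂₄.β n (ofg₂.ρ u) n) ∧
       (∀ u n n', γ₂₄ u (n + n') = γ₂₄ u n + ofg₄.φ (sq₂₄.β n' (ofg₂.ρ u) n) + γ₂₄ u n')) ∧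
      (∀ u a b, γ₂₄ (sq₁₂.γ u a) b = sq₁₄.γ u (μ₁₂₄ a b)) ∧
      (∀ u a b, sq₃₄.γ (sq₂₃.γ u a) b = γ₂₄ u (μ₂₃₄ a b)) :=
  statement14_general μ₁₂₃ μ₁₂₄ μ₁₃₄ μ₂₃₄ hμ₁₂₄r hμ₂₃₄l sq₁₂ sq₁₃ sq₁₄ sq₂₃ sq₃₄ sq₂₄ hgen hgenA
    hμassoc h123γ h134γ h124β h234α h234β
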